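/- Let A(z) = Σ_{i≥0} (6i)!/((3i)!(2i)!) (z/288)^i as a formal power series over ℚ. Then A satisfies the hypergeometric differential equation 3z²·(d²A/dz²) + (6z − 2)·(dA/dz) + (5/12)·A = 0 in ℚ[[z]]. -/

import Mathlib

/-! Comparing coefficients of `zⁿ` turns the equation into the first-order recurrence
`2(n+1) aₙ₊₁ = (3n² + 3n + 5/12) aₙ = (6n+1)(6n+5)/12 · aₙ`, and this is exactly the factorial
ratio `aₙ₊₁ / aₙ = (6n+1)(6n+5) / (24(n+1))` of the coefficients of `A`. -/

open PowerSeries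

/-- The hypergeometric series `A(z) = Σ_{i≥0} (6i)!/((3i)!(2i)!) (z/288)^i`. -/
noncomputable def seriesA : PowerSeries ℚ :=
  PowerSeries.mk fun i => ((6 * i).factorial : ℚ) / ((3 * i).factorial * (2 * i).factorial) *
    (1 / 288) ^ i

namespace PowerSeries

variable {R : Type*} [CommRing R]

theorem coeff_X_mul_derivative (f : R⟦X⟧) (n : ℕ) :
    coeff n (X * d⁄dX R f) = n * coeff n f := by
  cases n with
  | zero => simp
  | succ m => rw [coeff_succ_X_mul, coeff_derivative, mul_comm, Nat.cast_succ]

theorem coeff_X_sq_mul_derivative_derivative (f : R⟦X⟧) (n : ℕ) :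
    coeff n (X ^ 2 * d⁄dX R (d⁄dX R f)) = n * (n - 1) * coeff n f := by
  match n with
  | 0 => simp
  | 1 => simp [pow_two, mul_assoc, coeff_succ_X_mul]
  | m + 2 =>
    rw [pow_two, mul_assoc, coeff_succ_X_mul, coeff_succ_X_mul, coeff_derivative,
      coeff_derivative]
    push_cast
    ring

theorem coeff_hypergeometricOperator (f : R⟦X⟧) (c : R) (n : ℕ) :
    coeff n (3 * X ^ 2 * d⁄dX R (d⁄dX R f) + (6 * X - 2) * d⁄dX R f + C c * f) =
      (3 * n ^ 2 + 3 * n + c) * coeff n f - 2 * (n + 1) * coeff (n + 1) f := by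
  have h3 : (3 * X ^ 2 * d⁄dX R (d⁄dX R f) : R⟦X⟧) = C 3 * (X ^ 2 * d⁄dX R (d⁄dX R f)) := by
    rw [map_ofNat, mul_assoc]
  have h6 : ((6 * X - 2) * d⁄dX R f : R⟦X⟧) = C 6 * (X * d⁄dX R f) - C 2 * d⁄dX R f := by
    rw [map_ofNat, map_ofNat]; ring
  rw [h3, h6, map_add, map_add, map_sub, coeff_C_mul, coeff_C_mul, coeff_C_mul, coeff_C_mul,
    coeff_X_sq_mul_derivative_derivative, coeff_X_mul_derivative, coeff_derivative]
  ring

end PowerSeries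

theorem coeff_seriesA_succ (n : ℕ) :
    2 * (n + 1) * coeff (n + 1) seriesA = (3 * n ^ 2 + 3 * n + 5 / 12) * coeff n seriesA := by
  simp only [seriesA, coeff_mk, Nat.mul_succ, Nat.factorial_succ]
  have : ((3 * n).factorial : ℚ) ≠ 0 := by positivity
  have : ((2 * n).factorial : ℚ) ≠ 0 := by positivity
  push_cast
  field_simp
  ring

theorem FZ_hypergeometric_ODE :
    3 * X ^ 2 * (PowerSeries.derivative ℚ (PowerSeries.derivative ℚ seriesA)) +
      (6 * X - 2) * (PowerSeries.derivative ℚ seriesA) + C (5 / 12 : ℚ) * seriesA = 0 := by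
  ext n
  rw [coeff_hypergeometricOperator, coeff_seriesA_succ, sub_self, map_zero]
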